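/- arXiv:2209.00689 — 6 statements merged into one kernel-verified Lean document; each statement's English description precedes it below -/
import Mathlib

section
/- Let (g̃,∇̃) be the conformal-projective transformation of (g,∇) by smooth functions φ,ψ, and let η be a 1-form on M. Then (M,g,η,∇) is a semi-Weyl manifold admitting torsion if and only if (M,g̃,η,∇̃) is a semi-Weyl manifold admitting torsion. Moreover, the semi-dual connection ∇̃*_{(g̃,η)} of ∇̃ with respect to (g̃,η) and the semi-dual connection ∇*_{(g,η)} of ∇ with respect to (g,η) satisfy ∇̃*_{(g̃,η)}=∇*_{(g,η)}+dψ⊗I+I⊗dψ−g⊗∇φ. -/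
/-!
We work in a concrete model of a pseudo-Riemannian manifold: the manifold `M` is
(an open chart of) a real normed space `E`, vector fields are maps `E → E`,
smooth functions are maps `E → ℝ`, a (pseudo-Riemannian) metric is a field of
symmetric non-degenerate bilinear forms `g : E → E →ₗ[ℝ] E →ₗ[ℝ] ℝ`, a `1`-form
is a field of linear forms `η : E → E →ₗ[ℝ] ℝ`, and an affine connection is an
operation `D : (E → E) → (E → E) → (E → E)` on vector fields which is
function-linear in the first argument and a derivation in the second one.
-/

open scoped BigOperators

noncomputable section

variable {E : Type*} [NormedAddCommGroup E] [NormedSpace ℝ E]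

/-- The derivative `X(f)` of a function `f` along a vector field `X`. -/
def dirD (f : E → ℝ) (X : E → E) : E → ℝ := fun x => fderiv ℝ f x (X x)

/-- The Lie bracket `[X, Y]` of two vector fields. -/
def lieB (X Y : E → E) : E → E := fun x => fderiv ℝ Y x (X x) - fderiv ℝ X x (Y x)

/-- The torsion tensor `T^∇(X,Y) = ∇_X Y − ∇_Y X − [X,Y]` of an affine connection. -/
def tors (D : (E → E) → (E → E) → (E → E)) (X Y : E → E) : E → E :=
  fun x => D X Y x - D Y X x - lieB X Y x

/-- The curvature tensor `R^∇(X,Y)Z = ∇_X∇_Y Z − ∇_Y∇_X Z − ∇_{[X,Y]}Z`. -/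
def curv (D : (E → E) → (E → E) → (E → E)) (X Y Z : E → E) : E → E :=
  fun x => D X (D Y Z) x - D Y (D X Z) x - D (lieB X Y) Z x

/-- The covariant derivative `(∇_X g)(Y, Z)` of the metric `g`. -/
def covg (g : E → E →ₗ[ℝ] E →ₗ[ℝ] ℝ) (D : (E → E) → (E → E) → (E → E))
    (X Y Z : E → E) : E → ℝ :=
  fun x => fderiv ℝ (fun y => g y (Y y) (Z y)) x (X x)
    - g x (D X Y x) (Z x) - g x (Y x) (D X Z x)

/-- `g` is a pseudo-Riemannian metric: a symmetric non-degenerate bilinear form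
at every point. -/
def IsMetric (g : E → E →ₗ[ℝ] E →ₗ[ℝ] ℝ) : Prop :=
  (∀ x u v, g x u v = g x v u) ∧ ∀ x u, (∀ v, g x u v = 0) → u = 0

/-- `D` is an affine connection on vector fields. -/
def IsConn (D : (E → E) → (E → E) → (E → E)) : Prop :=
  (∀ X Y Z, D (fun x => X x + Y x) Z = fun x => D X Z x + D Y Z x) ∧
  (∀ (f : E → ℝ) (X Y), D (fun x => f x • X x) Y = fun x => f x • D X Y x) ∧
  (∀ X Y Z, D X (fun x => Y x + Z x) = fun x => D X Y x + D X Z x) ∧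
  (∀ (f : E → ℝ) (X Y), D X (fun x => f x • Y x)
      = fun x => dirD f X x • Y x + f x • D X Y x)

/-- The connection `D` is flat: its curvature tensor vanishes identically. -/
def FlatConn (D : (E → E) → (E → E) → (E → E)) : Prop := ∀ X Y Z x, curv D X Y Z x = 0

/-- The connection `D` is torsion-free: its torsion tensor vanishes identically. -/
def TorsFree (D : (E → E) → (E → E) → (E → E)) : Prop := ∀ X Y x, tors D X Y x = 0

/-- `(M, g, ∇)` is a statistical manifold admitting torsion (SMT):
`(∇_X g)(Y,Z) = (∇_Y g)(X,Z) − g(T^∇(X,Y),Z)`. -/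
def IsSMT (g : E → E →ₗ[ℝ] E →ₗ[ℝ] ℝ) (D : (E → E) → (E → E) → (E → E)) : Prop :=
  ∀ X Y Z x, covg g D X Y Z x = covg g D Y X Z x - g x (tors D X Y x) (Z x)

/-- `(M, g, η, ∇)` is a semi-Weyl manifold admitting torsion (SWMT):
`(∇_X g)(Y,Z) + η(X)g(Y,Z) = (∇_Y g)(X,Z) + η(Y)g(X,Z) − g(T^∇(X,Y),Z)`. -/
def IsSWMT (g : E → E →ₗ[ℝ] E →ₗ[ℝ] ℝ) (η : E → E →ₗ[ℝ] ℝ)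
    (D : (E → E) → (E → E) → (E → E)) : Prop :=
  ∀ X Y Z x, covg g D X Y Z x + η x (X x) * g x (Y x) (Z x)
    = covg g D Y X Z x + η x (Y x) * g x (X x) (Z x) - g x (tors D X Y x) (Z x)

/-- `D` and `Ds` are dual connections with respect to `g`:
`X(g(Y,Z)) = g(∇_X Y, Z) + g(Y, ∇*_X Z)`. -/
def DualConn (g : E → E →ₗ[ℝ] E →ₗ[ℝ] ℝ) (D Ds : (E → E) → (E → E) → (E → E)) : Prop :=
  ∀ X Y Z x, fderiv ℝ (fun y => g y (Y y) (Z y)) x (X x)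
    = g x (D X Y x) (Z x) + g x (Y x) (Ds X Z x)

/-- `D` and `Ds` are semi-dual connections with respect to `(g, η)`:
`X(g(Y,Z)) = g(∇_X Y, Z) + g(Y, ∇*_X Z) − η(X)g(Y,Z)`. -/
def SemiDualConn (g : E → E →ₗ[ℝ] E →ₗ[ℝ] ℝ) (η : E → E →ₗ[ℝ] ℝ)
    (D Ds : (E → E) → (E → E) → (E → E)) : Prop :=
  ∀ X Y Z x, fderiv ℝ (fun y => g y (Y y) (Z y)) x (X x)
    = g x (D X Y x) (Z x) + g x (Y x) (Ds X Z x) - η x (X x) * g x (Y x) (Z x)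

/-- The Ricci tensor `Ric(Y,Z) = Σᵢ εᵢ g(R(Eᵢ,Y)Z, Eᵢ)` of a connection, computed
via a `g`-orthonormal frame `Efr` with signs `eps`. -/
def ricci (g : E → E →ₗ[ℝ] E →ₗ[ℝ] ℝ) (D : (E → E) → (E → E) → (E → E))
    {n : ℕ} (Efr : Fin n → E → E) (eps : Fin n → ℝ) (Y Z : E → E) : E → ℝ :=
  fun x => ∑ i, eps i * g x (curv D (Efr i) Y Z x) (Efr i x)

/-- `trace (T_Y) = Σᵢ εᵢ g(T^∇(Eᵢ,Y), Eᵢ)`, the trace of `X ↦ T^∇(X,Y)`. -/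
def trTor (g : E → E →ₗ[ℝ] E →ₗ[ℝ] ℝ) (D : (E → E) → (E → E) → (E → E))
    {n : ℕ} (Efr : Fin n → E → E) (eps : Fin n → ℝ) (Y : E → E) : E → ℝ :=
  fun x => ∑ i, eps i * g x (tors D (Efr i) Y x) (Efr i x)

/-- A vector field is tangent to the submanifold determined by the field of
(tangential) projections `P`. -/
def Tang (P : E → E →ₗ[ℝ] E) (X : E → E) : Prop := ∀ x, P x (X x) = X x

/-- The projection of a vector field tangent to a lightlike hypersurface onto the
screen distribution, `P X = X − g(X,N)ξ`. -/
def scrP (g : E → E →ₗ[ℝ] E →ₗ[ℝ] ℝ) (ξ N : E → E) (X : E → E) : E → E :=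
  fun x => X x - g x (X x) (N x) • ξ x

/-- The induced connection on sections of the screen distribution of a lightlike
hypersurface: the `S(TM')`-component of `∇_X Y` in `TM = S(TM') ⊕ Rad(TM') ⊕ tr(TM')`. -/
def scrConn (g : E → E →ₗ[ℝ] E →ₗ[ℝ] ℝ) (ξ N : E → E)
    (D : (E → E) → (E → E) → (E → E)) : (E → E) → (E → E) → (E → E) :=
  fun X Y x => D X Y x - g x (D X Y x) (N x) • ξ x - g x (D X Y x) (ξ x) • N x

end

/-!
Semi-duality of `∇` and `∇*` together with the Leibniz rule of `∇` gives the product rule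
`X(f g(Y,Z)) = X(f) g(Y,Z) + f X(g(Y,Z))` for every function `f`. With `f = e^{φ+ψ}` this
expresses `(∇̃_X g̃)(Y,Z)` as `e^{φ+ψ}` times `(∇_X g)(Y,Z)` plus terms in `dψ − dφ` that are
symmetric in `X` and `Y`; since the projective change does not alter the torsion, the
SWMT identity for `(g̃, ∇̃)` is `e^{φ+ψ}` times the one for `(g, ∇)`. The same product rule
applied to the semi-duality of `(∇̃, ∇̃*)` determines `g(V, ∇̃*_X Y)` for every `V`, and
non-degeneracy of `g` identifies `∇̃*`.
-/

open Real

section ConformalProjective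

variable {E : Type*} [NormedAddCommGroup E] [NormedSpace ℝ E]
  {g gt : E → E →ₗ[ℝ] E →ₗ[ℝ] ℝ} {η : E → E →ₗ[ℝ] ℝ}
  {D Dt Ds Dts : (E → E) → (E → E) → (E → E)} {φ ψ : E → ℝ}

/- The product rule holds even where `f` or `g(Y,Z)` is not differentiable (junk `fderiv`):
both sides come from semi-duality against the constant field `u`, where `∇` obeys Leibniz. -/
theorem SemiDualConn.fderiv_mul_apply
    (hLeib : ∀ (f : E → ℝ) (X Y), D X (fun x => f x • Y x)
      = fun x => dirD f X x • Y x + f x • D X Y x)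
    (hsd : SemiDualConn g η D Ds) (f : E → ℝ) (Y Z : E → E) (x u : E) :
    fderiv ℝ (fun y => f y * g y (Y y) (Z y)) x u
      = fderiv ℝ f x u * g x (Y x) (Z x) + f x * fderiv ℝ (fun y => g y (Y y) (Z y)) x u := by
  have hfY := hsd (fun _ => u) (fun y => f y • Y y) Z x
  simp only [hLeib, dirD, map_add, map_smul, LinearMap.add_apply, LinearMap.smul_apply,
    smul_eq_mul] at hfY
  rw [hfY, hsd (fun _ => u) Y Z x]
  ring

theorem fderiv_exp_add_apply {x : E} (hφ : DifferentiableAt ℝ φ x)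
    (hψ : DifferentiableAt ℝ ψ x) (u : E) :
    fderiv ℝ (fun y => exp (φ y + ψ y)) x u
      = exp (φ x + ψ x) * (fderiv ℝ φ x u + fderiv ℝ ψ x u) := by
  rw [fderiv_exp (hφ.fun_add hψ), fderiv_fun_add hφ hψ]
  rfl

theorem SemiDualConn.fderiv_conformal_apply
    (hLeib : ∀ (f : E → ℝ) (X Y), D X (fun x => f x • Y x)
      = fun x => dirD f X x • Y x + f x • D X Y x)
    (hsd : SemiDualConn g η D Ds) (hφ : Differentiable ℝ φ) (hψ : Differentiable ℝ ψ)
    (hgt : ∀ x u v, gt x u v = exp (φ x + ψ x) * g x u v) (Y Z : E → E) (x u : E) :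
    fderiv ℝ (fun y => gt y (Y y) (Z y)) x u
      = exp (φ x + ψ x) * ((fderiv ℝ φ x u + fderiv ℝ ψ x u) * g x (Y x) (Z x)
        + fderiv ℝ (fun y => g y (Y y) (Z y)) x u) := by
  simp only [hgt]
  rw [hsd.fderiv_mul_apply hLeib, fderiv_exp_add_apply (hφ x) (hψ x)]
  ring

theorem tors_projective {gradψ : E → E} (hsymm : ∀ x u v, g x u v = g x v u)
    (hDt : ∀ X Y x, Dt X Y x
      = D X Y x + dirD φ X x • Y x + dirD φ Y x • X x - g x (X x) (Y x) • gradψ x)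
    (X Y : E → E) (x : E) :
    tors Dt X Y x = tors D X Y x := by
  simp only [tors, hDt, hsymm x (Y x) (X x)]
  module

theorem covg_conformal_projective {gradψ : E → E} (hsymm : ∀ x u v, g x u v = g x v u)
    (hgradψ : ∀ x v, g x (gradψ x) v = fderiv ℝ ψ x v)
    (hgt : ∀ x u v, gt x u v = exp (φ x + ψ x) * g x u v)
    (hDt : ∀ X Y x, Dt X Y x
      = D X Y x + dirD φ X x • Y x + dirD φ Y x • X x - g x (X x) (Y x) • gradψ x)
    (hdgt : ∀ (Y Z : E → E) (x u : E), fderiv ℝ (fun y => gt y (Y y) (Z y)) x u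
      = exp (φ x + ψ x) * ((fderiv ℝ φ x u + fderiv ℝ ψ x u) * g x (Y x) (Z x)
        + fderiv ℝ (fun y => g y (Y y) (Z y)) x u))
    (X Y Z : E → E) (x : E) :
    covg gt Dt X Y Z x
      = exp (φ x + ψ x) * (covg g D X Y Z x
        + (fderiv ℝ ψ x (X x) - fderiv ℝ φ x (X x)) * g x (Y x) (Z x)
        + (fderiv ℝ ψ x (Y x) - fderiv ℝ φ x (Y x)) * g x (X x) (Z x)
        + (fderiv ℝ ψ x (Z x) - fderiv ℝ φ x (Z x)) * g x (X x) (Y x)) := by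
  simp only [covg]
  rw [hdgt]
  simp only [hgt, hDt, dirD, map_add, map_sub, map_smul,
    LinearMap.add_apply, LinearMap.sub_apply, LinearMap.smul_apply, smul_eq_mul]
  rw [hgradψ, hsymm x (Y x) (gradψ x), hgradψ, hsymm x (Y x) (X x)]
  ring

theorem isSWMT_iff_of_conformal (hsymm : ∀ x u v, g x u v = g x v u)
    (hgt : ∀ x u v, gt x u v = exp (φ x + ψ x) * g x u v)
    (hcovg : ∀ (X Y Z : E → E) (x : E), covg gt Dt X Y Z x
      = exp (φ x + ψ x) * (covg g D X Y Z x
        + (fderiv ℝ ψ x (X x) - fderiv ℝ φ x (X x)) * g x (Y x) (Z x)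
        + (fderiv ℝ ψ x (Y x) - fderiv ℝ φ x (Y x)) * g x (X x) (Z x)
        + (fderiv ℝ ψ x (Z x) - fderiv ℝ φ x (Z x)) * g x (X x) (Y x)))
    (htors : ∀ (X Y : E → E) (x : E), tors Dt X Y x = tors D X Y x) :
    IsSWMT g η D ↔ IsSWMT gt η Dt := by
  have hdefect : ∀ (X Y Z : E → E) (x : E),
      covg gt Dt X Y Z x + η x (X x) * gt x (Y x) (Z x)
        - (covg gt Dt Y X Z x + η x (Y x) * gt x (X x) (Z x) - gt x (tors Dt X Y x) (Z x))
      = exp (φ x + ψ x) * (covg g D X Y Z x + η x (X x) * g x (Y x) (Z x)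
        - (covg g D Y X Z x + η x (Y x) * g x (X x) (Z x) - g x (tors D X Y x) (Z x))) := by
    intro X Y Z x
    rw [hcovg, hcovg, htors, hgt, hgt, hgt, hsymm x (Y x) (X x)]
    ring
  refine forall₂_congr fun X Y => forall₂_congr fun Z x => ?_
  rw [← sub_eq_zero, ← sub_eq_zero (a := covg gt Dt X Y Z x + _), hdefect]
  exact (mul_eq_zero_iff_left (exp_ne_zero _)).symm

theorem SemiDualConn.eq_of_conformal_projective {gradφ gradψ : E → E} (hg : IsMetric g)
    (hgradφ : ∀ x v, g x (gradφ x) v = fderiv ℝ φ x v)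
    (hgradψ : ∀ x v, g x (gradψ x) v = fderiv ℝ ψ x v)
    (hgt : ∀ x u v, gt x u v = exp (φ x + ψ x) * g x u v)
    (hDt : ∀ X Y x, Dt X Y x
      = D X Y x + dirD φ X x • Y x + dirD φ Y x • X x - g x (X x) (Y x) • gradψ x)
    (hdgt : ∀ (Y Z : E → E) (x u : E), fderiv ℝ (fun y => gt y (Y y) (Z y)) x u
      = exp (φ x + ψ x) * ((fderiv ℝ φ x u + fderiv ℝ ψ x u) * g x (Y x) (Z x)
        + fderiv ℝ (fun y => g y (Y y) (Z y)) x u))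
    (hsd : SemiDualConn g η D Ds) (hsdt : SemiDualConn gt η Dt Dts) (X Y : E → E) (x : E) :
    Dts X Y x
      = Ds X Y x + dirD ψ X x • Y x + dirD ψ Y x • X x - g x (X x) (Y x) • gradφ x := by
  have hpair : ∀ v, g x v (Dts X Y x) = g x v
      (Ds X Y x + dirD ψ X x • Y x + dirD ψ Y x • X x - g x (X x) (Y x) • gradφ x) := by
    intro v
    have ht := hsdt X (fun _ => v) Y x
    rw [hdgt, hsd X (fun _ => v) Y x, hgt, hgt, hgt, hDt] at ht
    simp only [dirD, map_add, map_sub, map_smul, LinearMap.add_apply, LinearMap.sub_apply,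
      LinearMap.smul_apply, smul_eq_mul] at ht ⊢
    rw [hgradψ, hg.1 x v (gradφ x), hgradφ, hg.1 x v (X x)] at *
    apply mul_left_cancel₀ (exp_ne_zero (φ x + ψ x))
    linear_combination -ht
  apply sub_eq_zero.mp (hg.2 x _ fun v => ?_)
  rw [hg.1, map_sub, hpair, sub_self]

end ConformalProjective

/-- Let `(g̃,∇̃)` be the conformal-projective transformation of
`(g,∇)` by smooth functions `φ,ψ` and let `η` be a `1`-form.  Then `(M,g,η,∇)` is a
SWMT iff `(M,g̃,η,∇̃)` is a SWMT; moreover the semi-dual connections satisfy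
`∇̃*_{(g̃,η)} = ∇*_{(g,η)} + dψ⊗I + I⊗dψ − g⊗∇φ`. -/
theorem statement5 {E : Type*} [NormedAddCommGroup E] [NormedSpace ℝ E]
    (g gt : E → E →ₗ[ℝ] E →ₗ[ℝ] ℝ) (hg : IsMetric g) (η : E → E →ₗ[ℝ] ℝ)
    (D Dt Dse Dtse : (E → E) → (E → E) → (E → E)) (hD : IsConn D)
    (φ ψ : E → ℝ) (hφ : ContDiff ℝ (⊤ : ℕ∞) φ) (hψ : ContDiff ℝ (⊤ : ℕ∞) ψ)
    (gradφ : E → E) (hgradφ : ∀ x v, g x (gradφ x) v = fderiv ℝ φ x v)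
    (gradψ : E → E) (hgradψ : ∀ x v, g x (gradψ x) v = fderiv ℝ ψ x v)
    (hgt : ∀ x u v, gt x u v = Real.exp (φ x + ψ x) * g x u v)
    (hDt : ∀ X Y x, Dt X Y x
      = D X Y x + dirD φ X x • Y x + dirD φ Y x • X x - g x (X x) (Y x) • gradψ x)
    (hsemidual : SemiDualConn g η D Dse)
    (hsemidualt : SemiDualConn gt η Dt Dtse) :
    (IsSWMT g η D ↔ IsSWMT gt η Dt) ∧
    (∀ X Y x, Dtse X Y x
      = Dse X Y x + dirD ψ X x • Y x + dirD ψ Y x • X x - g x (X x) (Y x) • gradφ x) := by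
  have hdgt := hsemidual.fderiv_conformal_apply hD.2.2.2 (hφ.differentiable (by simp))
    (hψ.differentiable (by simp)) hgt
  exact ⟨isSWMT_iff_of_conformal hg.1 hgt
      (covg_conformal_projective hg.1 hgradψ hgt hDt hdgt) (tors_projective hg.1 hDt),
    hsemidual.eq_of_conformal_projective hg hgradφ hgradψ hgt hDt hdgt hsemidualt⟩
end

section
/- Let (g̃,∇̃) be the conformal-projective transformation of (g,∇) by smooth functions φ,ψ. Then (M,g,∇) is a statistical manifold admitting torsion if and only if (M,g̃,∇̃) is a statistical manifold admitting torsion. Moreover, the dual connection ∇̃*_{g̃} of ∇̃ with respect to g̃ and the dual connection ∇*_g of ∇ with respect to g satisfy ∇̃*_{g̃}=∇*_g+dψ⊗I+I⊗dψ−g⊗∇φ. -/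
/-!
We work in a concrete model of a pseudo-Riemannian manifold: the manifold `M` is
(an open chart of) a real normed space `E`, vector fields are maps `E → E`,
smooth functions are maps `E → ℝ`, a (pseudo-Riemannian) metric is a field of
symmetric non-degenerate bilinear forms `g : E → E →ₗ[ℝ] E →ₗ[ℝ] ℝ`, a `1`-form
is a field of linear forms `η : E → E →ₗ[ℝ] ℝ`, and an affine connection is an
operation `D : (E → E) → (E → E) → (E → E)` on vector fields which is
function-linear in the first argument and a derivation in the second one.
-/

open scoped BigOperators

/-!
Write `σ = φ + ψ`. Testing the duality of `(g̃, ∇̃, ∇̃*)` against the rescaled field `e^{-σ} v`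
turns `g̃(e^{-σ} v, Z)` back into `g(v, Z)`, so comparing with the duality of `(g, ∇, ∇*)` and
using non-degeneracy of `g` gives the formula for `∇̃*`. Through duality the SMT defect
`(∇_X g)(Y,Z) − (∇_Y g)(X,Z) + g(T^∇(X,Y),Z)` is expressed by `∇`, `∇*` and `g` alone, and
substituting both transformation formulas shows that the defect of `(g̃, ∇̃)` is `e^σ` times
that of `(g, ∇)`.
-/

section

variable {E : Type*} [NormedAddCommGroup E] [NormedSpace ℝ E] {g : E → E →ₗ[ℝ] E →ₗ[ℝ] ℝ}

theorem IsMetric.eq_of_forall_apply_eq (hg : IsMetric g) (x : E) {a b : E}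
    (h : ∀ v, g x v a = g x v b) : a = b :=
  sub_eq_zero.mp <| hg.2 x _ fun v => by
    rw [hg.1, map_sub, h, sub_self]

theorem IsMetric.apply_grad (hg : IsMetric g) {f : E → ℝ} {grad : E → E}
    (hgrad : ∀ x v, g x (grad x) v = fderiv ℝ f x v) (x u : E) :
    g x u (grad x) = fderiv ℝ f x u := by
  rw [hg.1, hgrad]

end

noncomputable section

namespace ConformalProjective

variable {E : Type*} [NormedAddCommGroup E] [NormedSpace ℝ E]
  {g gt : E → E →ₗ[ℝ] E →ₗ[ℝ] ℝ} {D Dt Ds Dts : (E → E) → (E → E) → (E → E)}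
  {φ ψ : E → ℝ} {gradφ gradψ : E → E}

def smtDefect (g : E → E →ₗ[ℝ] E →ₗ[ℝ] ℝ) (D : (E → E) → (E → E) → (E → E))
    (X Y Z : E → E) (x : E) : ℝ :=
  covg g D X Y Z x - covg g D Y X Z x + g x (tors D X Y x) (Z x)

theorem isSMT_iff_smtDefect_eq_zero :
    IsSMT g D ↔ ∀ X Y Z x, smtDefect g D X Y Z x = 0 := by
  refine forall₄_congr fun X Y Z x => ?_
  rw [smtDefect]
  constructor <;> intro h <;> linarith

theorem covg_eq_of_dualConn (hdual : DualConn g D Ds) (X Y Z : E → E) (x : E) :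
    covg g D X Y Z x = g x (Y x) (Ds X Z x) - g x (Y x) (D X Z x) := by
  rw [covg, hdual]
  ring

theorem apply_exp_neg_smul (hgt : ∀ x u v, gt x u v = Real.exp (φ x + ψ x) * g x u v)
    (x v w : E) : gt x (Real.exp (-(φ x + ψ x)) • v) w = g x v w := by
  rw [hgt, map_smul, LinearMap.smul_apply, smul_eq_mul, ← mul_assoc, ← Real.exp_add,
    add_neg_cancel, Real.exp_zero, one_mul]

theorem fderiv_exp_neg_add (hφ : Differentiable ℝ φ) (hψ : Differentiable ℝ ψ) (x : E) :
    fderiv ℝ (fun y => Real.exp (-(φ y + ψ y))) x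
      = Real.exp (-(φ x + ψ x)) • (-(fderiv ℝ φ x + fderiv ℝ ψ x)) :=
  (((hφ x).hasFDerivAt.add (hψ x).hasFDerivAt).neg.exp).fderiv

theorem dual_eq (hg : IsMetric g) (hD : IsConn D)
    (hφ : Differentiable ℝ φ) (hψ : Differentiable ℝ ψ)
    (hgradφ : ∀ x v, g x (gradφ x) v = fderiv ℝ φ x v)
    (hgradψ : ∀ x v, g x (gradψ x) v = fderiv ℝ ψ x v)
    (hgt : ∀ x u v, gt x u v = Real.exp (φ x + ψ x) * g x u v)
    (hDt : ∀ X Y x, Dt X Y x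
      = D X Y x + dirD φ X x • Y x + dirD φ Y x • X x - g x (X x) (Y x) • gradψ x)
    (hdual : DualConn g D Ds) (hdualt : DualConn gt Dt Dts) (X Z : E → E) (x : E) :
    Dts X Z x
      = Ds X Z x + dirD ψ X x • Z x + dirD ψ Z x • X x - g x (X x) (Z x) • gradφ x := by
  refine hg.eq_of_forall_apply_eq x fun v => ?_
  set V : E → E := fun y => Real.exp (-(φ y + ψ y)) • v
  have hV : (fun y => gt y (V y) (Z y)) = fun y => g y v (Z y) :=
    funext fun y => apply_exp_neg_smul hgt y v (Z y)
  have hDV : D X V x = dirD (fun y => Real.exp (-(φ y + ψ y))) X x • v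
      + Real.exp (-(φ x + ψ x)) • D X (fun _ => v) x :=
    congrFun (hD.2.2.2 (fun y => Real.exp (-(φ y + ψ y))) X (fun _ => v)) x
  -- both sides are the derivative of `g(v, Z)` along `X`
  have hderiv := (hdualt X V Z x).symm.trans ((congrArg (fderiv ℝ · x (X x)) hV).trans
    (hdual X (fun _ => v) Z x))
  rw [hDt, hDV] at hderiv
  simp only [V, dirD, fderiv_exp_neg_add hφ hψ, hgt, map_add, map_smul, map_sub,
    LinearMap.add_apply, LinearMap.smul_apply, LinearMap.sub_apply, add_apply, smul_apply,
    neg_apply, smul_eq_mul, hg.apply_grad hgradφ] at hderiv ⊢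
  rw [hgradψ, hg.1 x (X x) v] at hderiv
  have hexp : Real.exp (-(φ x + ψ x)) * Real.exp (φ x + ψ x) = 1 := by
    rw [← Real.exp_add, neg_add_cancel, Real.exp_zero]
  linear_combination hderiv - (g x (D X (fun _ => v) x) (Z x) + g x v (Dts X Z x)
    - fderiv ℝ ψ x (X x) * g x v (Z x) + fderiv ℝ φ x v * g x (X x) (Z x)
    - fderiv ℝ ψ x (Z x) * g x v (X x)) * hexp

theorem smtDefect_eq_exp_mul (hg : IsMetric g)
    (hgradφ : ∀ x v, g x (gradφ x) v = fderiv ℝ φ x v)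
    (hgradψ : ∀ x v, g x (gradψ x) v = fderiv ℝ ψ x v)
    (hgt : ∀ x u v, gt x u v = Real.exp (φ x + ψ x) * g x u v)
    (hDt : ∀ X Y x, Dt X Y x
      = D X Y x + dirD φ X x • Y x + dirD φ Y x • X x - g x (X x) (Y x) • gradψ x)
    (hdual : DualConn g D Ds) (hdualt : DualConn gt Dt Dts)
    (hDts : ∀ X Z x, Dts X Z x
      = Ds X Z x + dirD ψ X x • Z x + dirD ψ Z x • X x - g x (X x) (Z x) • gradφ x)
    (X Y Z : E → E) (x : E) :
    smtDefect gt Dt X Y Z x = Real.exp (φ x + ψ x) * smtDefect g D X Y Z x := by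
  simp only [smtDefect, covg_eq_of_dualConn hdual, covg_eq_of_dualConn hdualt, tors, hDts,
    hDt, hgt, dirD, map_add, map_sub, map_smul, LinearMap.add_apply, LinearMap.sub_apply,
    LinearMap.smul_apply, smul_eq_mul, hg.apply_grad hgradφ, hg.apply_grad hgradψ, hgradψ]
  rw [hg.1 x (X x) (Y x)]
  ring

end ConformalProjective

end

open ConformalProjective in
/-- Let `(g̃,∇̃)` be the conformal-projective transformation of
`(g,∇)` by smooth functions `φ,ψ`.  Then `(M,g,∇)` is a SMT iff `(M,g̃,∇̃)` is a SMT;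
moreover the dual connections satisfy `∇̃*_{g̃} = ∇*_g + dψ⊗I + I⊗dψ − g⊗∇φ`. -/
theorem statement6 {E : Type*} [NormedAddCommGroup E] [NormedSpace ℝ E]
    (g gt : E → E →ₗ[ℝ] E →ₗ[ℝ] ℝ) (hg : IsMetric g)
    (D Dt Dsg Dtsg : (E → E) → (E → E) → (E → E)) (hD : IsConn D)
    (φ ψ : E → ℝ) (hφ : ContDiff ℝ (⊤ : ℕ∞) φ) (hψ : ContDiff ℝ (⊤ : ℕ∞) ψ)
    (gradφ : E → E) (hgradφ : ∀ x v, g x (gradφ x) v = fderiv ℝ φ x v)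
    (gradψ : E → E) (hgradψ : ∀ x v, g x (gradψ x) v = fderiv ℝ ψ x v)
    (hgt : ∀ x u v, gt x u v = Real.exp (φ x + ψ x) * g x u v)
    (hDt : ∀ X Y x, Dt X Y x
      = D X Y x + dirD φ X x • Y x + dirD φ Y x • X x - g x (X x) (Y x) • gradψ x)
    (hdual : DualConn g D Dsg)
    (hdualt : DualConn gt Dt Dtsg) :
    (IsSMT g D ↔ IsSMT gt Dt) ∧
    (∀ X Y x, Dtsg X Y x
      = Dsg X Y x + dirD ψ X x • Y x + dirD ψ Y x • X x - g x (X x) (Y x) • gradφ x) := by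
  have hDts := dual_eq hg hD (hφ.differentiable (by simp)) (hψ.differentiable (by simp))
    hgradφ hgradψ hgt hDt hdual hdualt
  refine ⟨?_, hDts⟩
  simp only [isSMT_iff_smtDefect_eq_zero,
    smtDefect_eq_exp_mul hg hgradφ hgradψ hgt hDt hdual hdualt hDts, mul_eq_zero,
    Real.exp_ne_zero, false_or]
end

section
/- Let (M,g,η,∇) be a semi-Weyl manifold admitting torsion (or (M,g,∇) a statistical manifold admitting torsion) and let ψ be a smooth function on M. Then g(T^∇(Y,Z),∇ψ)+g(T^∇(Z,∇ψ),Y)+g(T^∇(∇ψ,Y),Z)=0 for all vector fields Y,Z. -/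
/-!
We work in a concrete model of a pseudo-Riemannian manifold: the manifold `M` is
(an open chart of) a real normed space `E`, vector fields are maps `E → E`,
smooth functions are maps `E → ℝ`, a (pseudo-Riemannian) metric is a field of
symmetric non-degenerate bilinear forms `g : E → E →ₗ[ℝ] E →ₗ[ℝ] ℝ`, a `1`-form
is a field of linear forms `η : E → E →ₗ[ℝ] ℝ`, and an affine connection is an
operation `D : (E → E) → (E → E) → (E → E)` on vector fields which is
function-linear in the first argument and a derivation in the second one.
-/

open scoped BigOperators

/-! Each instance of the SWMT condition expresses `g(T(X,Y),Z)` as `A(Y,X,Z) − A(X,Y,Z)`, where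
`A(X,Y,Z) = (∇_X g)(Y,Z) + η(X) g(Y,Z)` is symmetric in `Y, Z`; in the cyclic sum over `X, Y, Z`
these six terms cancel in pairs. -/

theorem covg_comm {E : Type*} [NormedAddCommGroup E] [NormedSpace ℝ E]
    {g : E → E →ₗ[ℝ] E →ₗ[ℝ] ℝ} (hsym : ∀ x u v, g x u v = g x v u)
    (D : (E → E) → (E → E) → (E → E)) (X Y Z : E → E) (x : E) :
    covg g D X Y Z x = covg g D X Z Y x := by
  have hYZ : (fun y => g y (Y y) (Z y)) = fun y => g y (Z y) (Y y) := funext fun y => hsym y _ _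
  simp only [covg, hYZ, hsym x (D X Y x), hsym x (Y x) (D X Z x)]
  ring

theorem IsSWMT.torsion_cyclic_sum {E : Type*} [NormedAddCommGroup E] [NormedSpace ℝ E]
    {g : E → E →ₗ[ℝ] E →ₗ[ℝ] ℝ} {η : E → E →ₗ[ℝ] ℝ} {D : (E → E) → (E → E) → (E → E)}
    (hsw : IsSWMT g η D) (hsym : ∀ x u v, g x u v = g x v u) (X Y Z : E → E) (x : E) :
    g x (tors D X Y x) (Z x) + g x (tors D Y Z x) (X x) + g x (tors D Z X x) (Y x) = 0 := by
  linear_combination hsw X Y Z x + hsw Y Z X x + hsw Z X Y x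
    - covg_comm hsym D X Y Z x - covg_comm hsym D Y Z X x - covg_comm hsym D Z X Y x
    - η x (X x) * hsym x (Y x) (Z x) - η x (Y x) * hsym x (Z x) (X x)
    - η x (Z x) * hsym x (X x) (Y x)

theorem statement10_general {E : Type*} [NormedAddCommGroup E] [NormedSpace ℝ E]
    (g : E → E →ₗ[ℝ] E →ₗ[ℝ] ℝ) (hg : IsMetric g) (η : E → E →ₗ[ℝ] ℝ)
    (D : (E → E) → (E → E) → (E → E))
    (hsw : IsSWMT g η D)
    (gradψ : E → E) :
    ∀ Y Z x,
      g x (tors D Y Z x) (gradψ x) + g x (tors D Z gradψ x) (Y x)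
        + g x (tors D gradψ Y x) (Z x) = 0 := by
  intro Y Z x
  exact hsw.torsion_cyclic_sum hg.1 Y Z gradψ x

/-- Let `(M,g,η,∇)` be a semi-Weyl manifold admitting torsion
(the case `η = 0` being a statistical manifold admitting torsion) and let `ψ` be a
smooth function on `M`.  Then
`g(T^∇(Y,Z),∇ψ) + g(T^∇(Z,∇ψ),Y) + g(T^∇(∇ψ,Y),Z) = 0` for all vector fields. -/
theorem statement10 {E : Type*} [NormedAddCommGroup E] [NormedSpace ℝ E]
    (g : E → E →ₗ[ℝ] E →ₗ[ℝ] ℝ) (hg : IsMetric g) (η : E → E →ₗ[ℝ] ℝ)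
    (D : (E → E) → (E → E) → (E → E)) (hD : IsConn D)
    (hsw : IsSWMT g η D)
    (ψ : E → ℝ) (hψ : ContDiff ℝ (⊤ : ℕ∞) ψ)
    (gradψ : E → E) (hgradψ : ∀ x v, g x (gradψ x) v = fderiv ℝ ψ x v) :
    ∀ Y Z x,
      g x (tors D Y Z x) (gradψ x) + g x (tors D Z gradψ x) (Y x)
        + g x (tors D gradψ Y x) (Z x) = 0 :=
  statement10_general g hg η D hsw gradψ
end

section
/- Let M' be a pseudo-Riemannian (non-degenerate) submanifold of a semi-Weyl manifold admitting torsion (M,g,η,∇). Then (M',g',η',∇') is also a semi-Weyl manifold admitting torsion, where g' and η' are the induced tensors on M' and ∇'_X Y is the tangential component of ∇_X Y for X,Y tangent to M'. Moreover, the semi-dual connection of ∇' with respect to (g',η') equals the induced connection on M' of the semi-dual connection of ∇ with respect to (g,η). -/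
/-!
We work in a concrete model of a pseudo-Riemannian manifold: the manifold `M` is
(an open chart of) a real normed space `E`, vector fields are maps `E → E`,
smooth functions are maps `E → ℝ`, a (pseudo-Riemannian) metric is a field of
symmetric non-degenerate bilinear forms `g : E → E →ₗ[ℝ] E →ₗ[ℝ] ℝ`, a `1`-form
is a field of linear forms `η : E → E →ₗ[ℝ] ℝ`, and an affine connection is an
operation `D : (E → E) → (E → E) → (E → E)` on vector fields which is
function-linear in the first argument and a derivation in the second one.
-/

open scoped BigOperators

/- Since each `P x` is `g`-self-adjoint, `g(P w, Z) = g(w, P Z) = g(w, Z)` for `Z` tangent: replacing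
`∇` by its tangential part `P ∘ ∇` changes no term `g(∇_X Y, Z)` of the SWMT identity or of the
semi-dual relation once all the fields involved are tangent. -/

section InducedConnection

variable {E : Type*} [NormedAddCommGroup E] [NormedSpace ℝ E]
  {g : E → E →ₗ[ℝ] E →ₗ[ℝ] ℝ} {P : E → E →ₗ[ℝ] E}

def inducedConn (P : E → E →ₗ[ℝ] E) (D : (E → E) → (E → E) → (E → E)) :
    (E → E) → (E → E) → (E → E) :=
  fun X Y x => P x (D X Y x)

theorem metric_proj_left_of_tang (hsymP : ∀ x u v, g x (P x u) v = g x u (P x v))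
    {Z : E → E} (hZ : Tang P Z) (x w : E) : g x (P x w) (Z x) = g x w (Z x) := by
  rw [hsymP, hZ x]

theorem metric_proj_right_of_tang (hsymP : ∀ x u v, g x (P x u) v = g x u (P x v))
    {Y : E → E} (hY : Tang P Y) (x w : E) : g x (Y x) (P x w) = g x (Y x) w := by
  rw [← hsymP, hY x]

theorem covg_inducedConn_of_tang (hsymP : ∀ x u v, g x (P x u) v = g x u (P x v))
    (D : (E → E) → (E → E) → (E → E)) (X : E → E) {Y Z : E → E}
    (hY : Tang P Y) (hZ : Tang P Z) (x : E) :
    covg g (inducedConn P D) X Y Z x = covg g D X Y Z x := by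
  simp only [covg, inducedConn, metric_proj_left_of_tang hsymP hZ,
    metric_proj_right_of_tang hsymP hY]

theorem metric_tors_inducedConn_of_tang (hsymP : ∀ x u v, g x (P x u) v = g x u (P x v))
    (D : (E → E) → (E → E) → (E → E)) (X Y : E → E) {Z : E → E} (hZ : Tang P Z) (x : E) :
    g x (tors (inducedConn P D) X Y x) (Z x) = g x (tors D X Y x) (Z x) := by
  simp only [tors, inducedConn, map_sub, LinearMap.sub_apply,
    metric_proj_left_of_tang hsymP hZ]

theorem semiDualConn_inducedConn_of_tang (hsymP : ∀ x u v, g x (P x u) v = g x u (P x v))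
    {η : E → E →ₗ[ℝ] ℝ} {D Ds : (E → E) → (E → E) → (E → E)}
    (hsemidual : SemiDualConn g η D Ds) (X : E → E) {Y Z : E → E}
    (hY : Tang P Y) (hZ : Tang P Z) (x : E) :
    fderiv ℝ (fun y => g y (Y y) (Z y)) x (X x)
      = g x (inducedConn P D X Y x) (Z x) + g x (Y x) (inducedConn P Ds X Z x)
        - η x (X x) * g x (Y x) (Z x) := by
  rw [inducedConn, inducedConn, metric_proj_left_of_tang hsymP hZ,
    metric_proj_right_of_tang hsymP hY]
  exact hsemidual X Y Z x

theorem isSWMT_inducedConn_of_tang (hsymP : ∀ x u v, g x (P x u) v = g x u (P x v))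
    {η : E → E →ₗ[ℝ] ℝ} {D : (E → E) → (E → E) → (E → E)} (hsw : IsSWMT g η D)
    {X Y Z : E → E} (hX : Tang P X) (hY : Tang P Y) (hZ : Tang P Z) (x : E) :
    covg g (inducedConn P D) X Y Z x + η x (X x) * g x (Y x) (Z x)
      = covg g (inducedConn P D) Y X Z x + η x (Y x) * g x (X x) (Z x)
        - g x (tors (inducedConn P D) X Y x) (Z x) := by
  rw [covg_inducedConn_of_tang hsymP D X hY hZ, covg_inducedConn_of_tang hsymP D Y hX hZ,
    metric_tors_inducedConn_of_tang hsymP D X Y hZ]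
  exact hsw X Y Z x

end InducedConnection

theorem statement12_general {E : Type*} [NormedAddCommGroup E] [NormedSpace ℝ E]
    (g : E → E →ₗ[ℝ] E →ₗ[ℝ] ℝ) (η : E → E →ₗ[ℝ] ℝ)
    (D : (E → E) → (E → E) → (E → E))
    (hsw : IsSWMT g η D)
    (Ds : (E → E) → (E → E) → (E → E)) (hsemidual : SemiDualConn g η D Ds)
    (P : E → E →ₗ[ℝ] E)
    (hsymP : ∀ x u v, g x (P x u) v = g x u (P x v)) :
    (∀ X Y Z, Tang P X → Tang P Y → Tang P Z → ∀ x,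
        covg g (fun X' Y' x' => P x' (D X' Y' x')) X Y Z x + η x (X x) * g x (Y x) (Z x)
          = covg g (fun X' Y' x' => P x' (D X' Y' x')) Y X Z x
              + η x (Y x) * g x (X x) (Z x)
            - g x (tors (fun X' Y' x' => P x' (D X' Y' x')) X Y x) (Z x)) ∧
    (∀ X Y Z, Tang P X → Tang P Y → Tang P Z → ∀ x,
        fderiv ℝ (fun y => g y (Y y) (Z y)) x (X x)
          = g x (P x (D X Y x)) (Z x) + g x (Y x) (P x (Ds X Z x))
            - η x (X x) * g x (Y x) (Z x)) :=
  ⟨fun _ _ _ hX hY hZ => isSWMT_inducedConn_of_tang hsymP hsw hX hY hZ,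
    fun X _ _ _ hY hZ => semiDualConn_inducedConn_of_tang hsymP hsemidual X hY hZ⟩

/-- A non-degenerate (pseudo-Riemannian) submanifold `M'` of a
semi-Weyl manifold admitting torsion `(M,g,η,∇)` — encoded by the field `P` of
`g`-orthogonal projections onto the (involutive) tangent distribution of `M'` — is
again a SWMT with the induced structure `(g',η',∇')`, `∇'_X Y = P(∇_X Y)`; moreover
the semi-dual connection of `∇'` with respect to `(g',η')` is the induced connection
`P ∘ ∇*` of the semi-dual connection `∇*` of `∇` with respect to `(g,η)`. -/
theorem statement12 {E : Type*} [NormedAddCommGroup E] [NormedSpace ℝ E]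
    (g : E → E →ₗ[ℝ] E →ₗ[ℝ] ℝ) (hg : IsMetric g) (η : E → E →ₗ[ℝ] ℝ)
    (D : (E → E) → (E → E) → (E → E)) (hD : IsConn D)
    (hsw : IsSWMT g η D)
    (Ds : (E → E) → (E → E) → (E → E)) (hsemidual : SemiDualConn g η D Ds)
    (P : E → E →ₗ[ℝ] E)
    (hidem : ∀ x v, P x (P x v) = P x v)
    (hsymP : ∀ x u v, g x (P x u) v = g x u (P x v))
    (hnd : ∀ x u, P x u = u → (∀ v, P x v = v → g x u v = 0) → u = 0)
    (hinv : ∀ X Y, Tang P X → Tang P Y → Tang P (lieB X Y)) :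
    (∀ X Y Z, Tang P X → Tang P Y → Tang P Z → ∀ x,
        covg g (fun X' Y' x' => P x' (D X' Y' x')) X Y Z x + η x (X x) * g x (Y x) (Z x)
          = covg g (fun X' Y' x' => P x' (D X' Y' x')) Y X Z x
              + η x (Y x) * g x (X x) (Z x)
            - g x (tors (fun X' Y' x' => P x' (D X' Y' x')) X Y x) (Z x)) ∧
    (∀ X Y Z, Tang P X → Tang P Y → Tang P Z → ∀ x,
        fderiv ℝ (fun y => g y (Y y) (Z y)) x (X x)
          = g x (P x (D X Y x)) (Z x) + g x (Y x) (P x (Ds X Z x))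
            - η x (X x) * g x (Y x) (Z x)) :=
  statement12_general g η D hsw Ds hsemidual P hsymP
end

section
/- Let (M',g',η',∇') be a non-degenerate hypersurface with induced structure in a semi-Weyl manifold admitting torsion (M,g,η,∇), with unit normal N, g(N,N)=ε=±1. Then the (0,2)-tensor field β(X,Y):=−g(∇_X N,Y) on M' is symmetric, and (εα,β)=(β*,εα*), where α(X,Y):=εg(∇_X Y,N), and α*, β* are the corresponding tensors for the semi-dual connection ∇* of ∇ with respect to (g,η). -/
/-!
We work in a concrete model of a pseudo-Riemannian manifold: the manifold `M` is
(an open chart of) a real normed space `E`, vector fields are maps `E → E`,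
smooth functions are maps `E → ℝ`, a (pseudo-Riemannian) metric is a field of
symmetric non-degenerate bilinear forms `g : E → E →ₗ[ℝ] E →ₗ[ℝ] ℝ`, a `1`-form
is a field of linear forms `η : E → E →ₗ[ℝ] ℝ`, and an affine connection is an
operation `D : (E → E) → (E → E) → (E → E)` on vector fields which is
function-linear in the first argument and a derivation in the second one.
-/

open scoped BigOperators

/-!
Each identity is a defining identity evaluated on vector fields `g`-orthogonal to `N`: then
`g(Y, N)` vanishes identically, so its derivative along `X` is zero, and every `η`-term carries
such a factor. The SWMT identity on `(X, Y, N)` gives the symmetry of `β` (the torsion term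
reduces to `g([X, Y], N) = 0` since `M'` is involutive), and the semi-duality identity on
`(X, Y, N)` and on `(X, N, Y)` gives `εα = β*` and `β = εα*`, using `ε² = 1`.
-/

section Hypersurface

variable {E : Type*} [NormedAddCommGroup E] [NormedSpace ℝ E]
  {g : E → E →ₗ[ℝ] E →ₗ[ℝ] ℝ} {η : E → E →ₗ[ℝ] ℝ} {D Ds : (E → E) → (E → E) → (E → E)}

theorem fderiv_metric_eq_zero_of_orthogonal {Y Z : E → E} (hYZ : ∀ y, g y (Y y) (Z y) = 0)
    (x : E) : fderiv ℝ (fun y => g y (Y y) (Z y)) x = 0 := by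
  simp only [hYZ, fderiv_fun_const, Pi.zero_apply]

theorem covg_eq_of_orthogonal {Y Z : E → E} (hYZ : ∀ y, g y (Y y) (Z y) = 0) (X : E → E)
    (x : E) : covg g D X Y Z x = -g x (D X Y x) (Z x) - g x (Y x) (D X Z x) := by
  simp only [covg, fderiv_metric_eq_zero_of_orthogonal hYZ, zero_apply, zero_sub]

theorem IsSWMT.metric_conn_normal_comm (hsym : ∀ x u v, g x u v = g x v u)
    (hsw : IsSWMT g η D) {X Y N : E → E} (hX : ∀ y, g y (X y) (N y) = 0)
    (hY : ∀ y, g y (Y y) (N y) = 0) (x : E) (hXY : g x (lieB X Y x) (N x) = 0) :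
    g x (D X N x) (Y x) = g x (D Y N x) (X x) := by
  have h := hsw X Y N x
  simp only [covg_eq_of_orthogonal hX, covg_eq_of_orthogonal hY, hX, hY, tors, map_sub,
    LinearMap.sub_apply, hXY, mul_zero, add_zero] at h
  rw [hsym x (D X N x), hsym x (D Y N x)]
  linarith

theorem SemiDualConn.metric_conn_eq_neg_of_orthogonal (hsd : SemiDualConn g η D Ds)
    {Y Z : E → E} (hYZ : ∀ y, g y (Y y) (Z y) = 0) (X : E → E) (x : E) :
    g x (D X Y x) (Z x) = -g x (Y x) (Ds X Z x) := by
  have h := hsd X Y Z x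
  rw [fderiv_metric_eq_zero_of_orthogonal hYZ, hYZ, mul_zero, sub_zero, zero_apply] at h
  linarith

theorem Tang.metric_normal_eq_zero {P : E → E →ₗ[ℝ] E} {N X : E → E}
    (hPorth : ∀ x v, g x (P x v) (N x) = 0) (hX : Tang P X) (x : E) :
    g x (X x) (N x) = 0 := by
  rw [← hX x]
  exact hPorth x _

end Hypersurface

theorem statement14_general {E : Type*} [NormedAddCommGroup E] [NormedSpace ℝ E]
    (g : E → E →ₗ[ℝ] E →ₗ[ℝ] ℝ) (hg : IsMetric g) (η : E → E →ₗ[ℝ] ℝ)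
    (D : (E → E) → (E → E) → (E → E))
    (hsw : IsSWMT g η D)
    (Ds : (E → E) → (E → E) → (E → E)) (hsemidual : SemiDualConn g η D Ds)
    (P : E → E →ₗ[ℝ] E) (N : E → E) (ε : ℝ) (hε : ε = 1 ∨ ε = -1)
    (hPorth : ∀ x v, g x (P x v) (N x) = 0)
    (hinv : ∀ X Y, Tang P X → Tang P Y → Tang P (lieB X Y)) :
    (∀ X Y, Tang P X → Tang P Y → ∀ x,
        -g x (D X N x) (Y x) = -g x (D Y N x) (X x)) ∧
    (∀ X Y, Tang P X → Tang P Y → ∀ x,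
        ε * (ε * g x (D X Y x) (N x)) = -g x (Ds X N x) (Y x)) ∧
    (∀ X Y, Tang P X → Tang P Y → ∀ x,
        -g x (D X N x) (Y x) = ε * (ε * g x (Ds X Y x) (N x))) := by
  obtain ⟨hsym, -⟩ := hg
  have hεε : ∀ a, ε * (ε * a) = a := by rcases hε with rfl | rfl <;> simp
  have hnormal {X : E → E} (hX : Tang P X) : ∀ x, g x (X x) (N x) = 0 :=
    hX.metric_normal_eq_zero hPorth
  have hnormal' {X : E → E} (hX : Tang P X) : ∀ x, g x (N x) (X x) = 0 := fun x => by
    rw [hsym, hnormal hX]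
  refine ⟨fun X Y hX hY x => ?_, fun X Y hX hY x => ?_, fun X Y hX hY x => ?_⟩
  · rw [hsw.metric_conn_normal_comm hsym (hnormal hX) (hnormal hY) x
      (hnormal (hinv X Y hX hY) x)]
  · rw [hεε, hsemidual.metric_conn_eq_neg_of_orthogonal (hnormal hY), hsym]
  · rw [hεε, hsemidual.metric_conn_eq_neg_of_orthogonal (hnormal' hY), neg_neg, hsym]

/-- Let `(M',g',η',∇')` be a non-degenerate hypersurface (with
induced structure) of a SWMT `(M,g,η,∇)`, with unit normal `N`, `g(N,N) = ε = ±1`.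
Then the tensor `β(X,Y) = −g(∇_X N, Y)` on `M'` is symmetric, and
`(εα,β) = (β*,εα*)`, i.e. `εα = β*` and `β = εα*`, where `α(X,Y) = εg(∇_X Y,N)` and
`α*,β*` are the analogous tensors of the semi-dual connection `∇*` of `∇` with
respect to `(g,η)`. -/
theorem statement14 {E : Type*} [NormedAddCommGroup E] [NormedSpace ℝ E]
    (g : E → E →ₗ[ℝ] E →ₗ[ℝ] ℝ) (hg : IsMetric g) (η : E → E →ₗ[ℝ] ℝ)
    (D : (E → E) → (E → E) → (E → E)) (hD : IsConn D)
    (hsw : IsSWMT g η D)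
    (Ds : (E → E) → (E → E) → (E → E)) (hsemidual : SemiDualConn g η D Ds)
    (P : E → E →ₗ[ℝ] E) (N : E → E) (ε : ℝ) (hε : ε = 1 ∨ ε = -1)
    (hidem : ∀ x v, P x (P x v) = P x v)
    (hNunit : ∀ x, g x (N x) (N x) = ε)
    (hPN : ∀ x, P x (N x) = 0)
    (hPorth : ∀ x v, g x (P x v) (N x) = 0)
    (hdecomp : ∀ x v, v = P x v + (ε * g x v (N x)) • N x)
    (hinv : ∀ X Y, Tang P X → Tang P Y → Tang P (lieB X Y)) :
    (∀ X Y, Tang P X → Tang P Y → ∀ x,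
        -g x (D X N x) (Y x) = -g x (D Y N x) (X x)) ∧
    (∀ X Y, Tang P X → Tang P Y → ∀ x,
        ε * (ε * g x (D X Y x) (N x)) = -g x (Ds X N x) (Y x)) ∧
    (∀ X Y, Tang P X → Tang P Y → ∀ x,
        -g x (D X N x) (Y x) = ε * (ε * g x (Ds X Y x) (N x))) :=
  statement14_general g hg η D hsw Ds hsemidual P N ε hε hPorth hinv
end

section
/- Let M' be a non-degenerate hypersurface of a pseudo-Riemannian manifold (M,g) with affine connection ∇, unit normal N (g(N,N)=ε=±1), Gauss formula ∇_X Y=∇'_X Y+α(X,Y)N and Weingarten formula ∇_X N=−B(X)+τ(X)N. Then the curvature tensors satisfy, for all X,Y,Z tangent to M': R^∇(X,Y)Z = R^{∇'}(X,Y)Z − (α(Y,Z)B(X)−α(X,Z)B(Y)) + ((∇'_X α)(Y,Z)+α(Y,Z)τ(X)−(∇'_Y α)(X,Z)−α(X,Z)τ(Y)+α(T^{∇'}(X,Y),Z))N. -/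
/-!
We work in a concrete model of a pseudo-Riemannian manifold: the manifold `M` is
(an open chart of) a real normed space `E`, vector fields are maps `E → E`,
smooth functions are maps `E → ℝ`, a (pseudo-Riemannian) metric is a field of
symmetric non-degenerate bilinear forms `g : E → E →ₗ[ℝ] E →ₗ[ℝ] ℝ`, a `1`-form
is a field of linear forms `η : E → E →ₗ[ℝ] ℝ`, and an affine connection is an
operation `D : (E → E) → (E → E) → (E → E)` on vector fields which is
function-linear in the first argument and a derivation in the second one.
-/

open scoped BigOperators

/-!
Apply the Gauss formula twice to `∇_X ∇_Y Z`: once to `∇_Y Z = ∇'_Y Z + α(Y,Z)N`, then to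
`∇_X ∇'_Y Z`, and use the Leibniz rule and the Weingarten formula for `∇_X (α(Y,Z)N)`.
Antisymmetrising and subtracting `∇_{[X,Y]}Z` gives the formula, once `α([X,Y],Z)` has been
rewritten as `α(∇'_X Y,Z) − α(∇'_Y X,Z) − α(T^{∇'}(X,Y),Z)`. That last step needs `α` to be
additive in its first argument, which follows from `α(W,Z) = ε g(∇_W Z, N)`.
-/

theorem coeff_eq_of_add_smul {V : Type*} [AddCommGroup V] [Module ℝ V]
    (b : V →ₗ[ℝ] V →ₗ[ℝ] ℝ) {t n : V} {a ε : ℝ}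
    (ht : b t n = 0) (hn : b n n = ε) (hε : ε * ε = 1) :
    a = ε * b (t + a • n) n := by
  simp only [map_add, map_smul, LinearMap.add_apply, LinearMap.smul_apply, smul_eq_mul, ht, hn]
  linear_combination (-a) * hε

section VectorFields

variable {E : Type*} [NormedAddCommGroup E] [NormedSpace ℝ E]

theorem IsConn.sub_left {D : (E → E) → (E → E) → (E → E)} (hD : IsConn D) (X Y Z : E → E) :
    D (fun x => X x - Y x) Z = fun x => D X Z x - D Y Z x := by
  have hneg : D (fun x => (-1 : ℝ) • Y x) Z = fun x => -D Y Z x := by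
    rw [hD.2.1 (fun _ => -1) Y Z]
    simp only [neg_smul, one_smul]
  calc D (fun x => X x - Y x) Z = D (fun x => X x + (-1 : ℝ) • Y x) Z := by
        simp only [neg_smul, one_smul, sub_eq_add_neg]
    _ = fun x => D X Z x - D Y Z x := by
        rw [hD.1, hneg]
        simp only [sub_eq_add_neg]

theorem Tang.sub {P : E → E →ₗ[ℝ] E} {X Y : E → E} (hX : Tang P X) (hY : Tang P Y) :
    Tang P (fun x => X x - Y x) := fun x => by
  rw [map_sub, hX x, hY x]

variable {g : E → E →ₗ[ℝ] E →ₗ[ℝ] ℝ} {D D' : (E → E) → (E → E) → (E → E)}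
  {P : E → E →ₗ[ℝ] E} {N : E → E} {ε : ℝ} {α : (E → E) → (E → E) → E → ℝ}
  {B : (E → E) → (E → E)} {τ : (E → E) → E → ℝ}

theorem secondFundForm_eq (hε : ε * ε = 1) (hNunit : ∀ x, g x (N x) (N x) = ε)
    (hPorth : ∀ x v, g x (P x v) (N x) = 0)
    (hGauss : ∀ X Y, Tang P X → Tang P Y → ∀ x, D X Y x = D' X Y x + α X Y x • N x)
    (hD'tan : ∀ X Y, Tang P X → Tang P Y → Tang P (D' X Y))
    {W Z : E → E} (hW : Tang P W) (hZ : Tang P Z) (x : E) :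
    α W Z x = ε * g x (D W Z x) (N x) := by
  have horth : g x (D' W Z x) (N x) = 0 := by
    rw [← hD'tan W Z hW hZ x]
    exact hPorth x _
  rw [hGauss W Z hW hZ x]
  exact coeff_eq_of_add_smul (g x) horth (hNunit x) hε

theorem secondFundForm_sub_left (hD : IsConn D) (hε : ε * ε = 1)
    (hNunit : ∀ x, g x (N x) (N x) = ε) (hPorth : ∀ x v, g x (P x v) (N x) = 0)
    (hGauss : ∀ X Y, Tang P X → Tang P Y → ∀ x, D X Y x = D' X Y x + α X Y x • N x)
    (hD'tan : ∀ X Y, Tang P X → Tang P Y → Tang P (D' X Y))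
    {W₁ W₂ Z : E → E} (hW₁ : Tang P W₁) (hW₂ : Tang P W₂) (hZ : Tang P Z) (x : E) :
    α (fun y => W₁ y - W₂ y) Z x = α W₁ Z x - α W₂ Z x := by
  have hα {W : E → E} (hW : Tang P W) := secondFundForm_eq hε hNunit hPorth hGauss hD'tan hW hZ x
  rw [hα (hW₁.sub hW₂), hα hW₁, hα hW₂, hD.sub_left, map_sub, LinearMap.sub_apply,
    mul_sub]

theorem secondFundForm_tors (hD : IsConn D) (hε : ε * ε = 1)
    (hNunit : ∀ x, g x (N x) (N x) = ε) (hPorth : ∀ x v, g x (P x v) (N x) = 0)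
    (hinv : ∀ X Y, Tang P X → Tang P Y → Tang P (lieB X Y))
    (hGauss : ∀ X Y, Tang P X → Tang P Y → ∀ x, D X Y x = D' X Y x + α X Y x • N x)
    (hD'tan : ∀ X Y, Tang P X → Tang P Y → Tang P (D' X Y))
    {X Y Z : E → E} (hX : Tang P X) (hY : Tang P Y) (hZ : Tang P Z) (x : E) :
    α (tors D' X Y) Z x = α (D' X Y) Z x - α (D' Y X) Z x - α (lieB X Y) Z x := by
  have hsub {W₁ W₂ : E → E} (hW₁ : Tang P W₁) (hW₂ : Tang P W₂) :=
    secondFundForm_sub_left hD hε hNunit hPorth hGauss hD'tan hW₁ hW₂ hZ x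
  have hXY := hD'tan X Y hX hY
  have hYX := hD'tan Y X hY hX
  rw [show tors D' X Y = fun y => (D' X Y y - D' Y X y) - lieB X Y y from rfl,
    hsub (hXY.sub hYX) (hinv X Y hX hY), hsub hXY hYX]

theorem covD_covD_eq (hD : IsConn D)
    (hGauss : ∀ X Y, Tang P X → Tang P Y → ∀ x, D X Y x = D' X Y x + α X Y x • N x)
    (hD'tan : ∀ X Y, Tang P X → Tang P Y → Tang P (D' X Y))
    (hWein : ∀ X, Tang P X → ∀ x, D X N x = -B X x + τ X x • N x)
    {U V Z : E → E} (hU : Tang P U) (hV : Tang P V) (hZ : Tang P Z) (x : E) :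
    D U (D V Z) x = D' U (D' V Z) x + α U (D' V Z) x • N x
      + fderiv ℝ (fun y => α V Z y) x (U x) • N x + α V Z x • (-B U x + τ U x • N x) := by
  have hVZ : D V Z = fun y => D' V Z y + α V Z y • N y := funext (hGauss V Z hV hZ)
  rw [hVZ, hD.2.2.1, hD.2.2.2]
  simp only [dirD]
  rw [hGauss U (D' V Z) hU (hD'tan V Z hV hZ) x, hWein U hU x]
  abel

end VectorFields

theorem statement16_general {E : Type*} [NormedAddCommGroup E] [NormedSpace ℝ E]
    (g : E → E →ₗ[ℝ] E →ₗ[ℝ] ℝ)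
    (D D' : (E → E) → (E → E) → (E → E)) (hD : IsConn D)
    (P : E → E →ₗ[ℝ] E) (N : E → E) (ε : ℝ) (hε : ε = 1 ∨ ε = -1)
    (hNunit : ∀ x, g x (N x) (N x) = ε)
    (hPorth : ∀ x v, g x (P x v) (N x) = 0)
    (hinv : ∀ X Y, Tang P X → Tang P Y → Tang P (lieB X Y))
    (α : (E → E) → (E → E) → E → ℝ) (B : (E → E) → (E → E)) (τ : (E → E) → E → ℝ)
    (hGauss : ∀ X Y, Tang P X → Tang P Y → ∀ x, D X Y x = D' X Y x + α X Y x • N x)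
    (hD'tan : ∀ X Y, Tang P X → Tang P Y → Tang P (D' X Y))
    (hWein : ∀ X, Tang P X → ∀ x, D X N x = -B X x + τ X x • N x) :
    ∀ X Y Z, Tang P X → Tang P Y → Tang P Z → ∀ x,
      curv D X Y Z x
        = curv D' X Y Z x - (α Y Z x • B X x - α X Z x • B Y x)
          + ((fderiv ℝ (fun y => α Y Z y) x (X x) - α (D' X Y) Z x - α Y (D' X Z) x)
              + α Y Z x * τ X x
              - (fderiv ℝ (fun y => α X Z y) x (Y x) - α (D' Y X) Z x - α X (D' Y Z) x)
              - α X Z x * τ Y x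
              + α (tors D' X Y) Z x) • N x := by
  intro X Y Z hX hY hZ x
  have hε2 : ε * ε = 1 := by rcases hε with rfl | rfl <;> norm_num
  rw [secondFundForm_tors hD hε2 hNunit hPorth hinv hGauss hD'tan hX hY hZ, curv, curv,
    covD_covD_eq hD hGauss hD'tan hWein hX hY hZ, covD_covD_eq hD hGauss hD'tan hWein hY hX hZ,
    hGauss _ Z (hinv X Y hX hY) hZ x]
  module

/-- (Gauss equation.)  For a non-degenerate hypersurface `M'`
of `(M,g)` with affine connection `∇`, unit normal `N` (`g(N,N) = ε = ±1`), Gauss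
formula `∇_X Y = ∇'_X Y + α(X,Y)N` and Weingarten formula `∇_X N = −B(X) + τ(X)N`,
the curvature tensors satisfy
`R^∇(X,Y)Z = R^{∇'}(X,Y)Z − (α(Y,Z)B(X) − α(X,Z)B(Y))`
`+ ((∇'_X α)(Y,Z) + α(Y,Z)τ(X) − (∇'_Y α)(X,Z) − α(X,Z)τ(Y) + α(T^{∇'}(X,Y),Z))N`. -/
theorem statement16 {E : Type*} [NormedAddCommGroup E] [NormedSpace ℝ E]
    (g : E → E →ₗ[ℝ] E →ₗ[ℝ] ℝ) (hg : IsMetric g)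
    (D D' : (E → E) → (E → E) → (E → E)) (hD : IsConn D)
    (P : E → E →ₗ[ℝ] E) (N : E → E) (ε : ℝ) (hε : ε = 1 ∨ ε = -1)
    (hidem : ∀ x v, P x (P x v) = P x v)
    (hNunit : ∀ x, g x (N x) (N x) = ε)
    (hPN : ∀ x, P x (N x) = 0)
    (hPorth : ∀ x v, g x (P x v) (N x) = 0)
    (hdecomp : ∀ x v, v = P x v + (ε * g x v (N x)) • N x)
    (hinv : ∀ X Y, Tang P X → Tang P Y → Tang P (lieB X Y))
    (α : (E → E) → (E → E) → E → ℝ) (B : (E → E) → (E → E)) (τ : (E → E) → E → ℝ)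
    (hGauss : ∀ X Y, Tang P X → Tang P Y → ∀ x, D X Y x = D' X Y x + α X Y x • N x)
    (hD'tan : ∀ X Y, Tang P X → Tang P Y → Tang P (D' X Y))
    (hWein : ∀ X, Tang P X → ∀ x, D X N x = -B X x + τ X x • N x)
    (hBtan : ∀ X, Tang P X → Tang P (B X)) :
    ∀ X Y Z, Tang P X → Tang P Y → Tang P Z → ∀ x,
      curv D X Y Z x
        = curv D' X Y Z x - (α Y Z x • B X x - α X Z x • B Y x)
          + ((fderiv ℝ (fun y => α Y Z y) x (X x) - α (D' X Y) Z x - α Y (D' X Z) x)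
              + α Y Z x * τ X x
              - (fderiv ℝ (fun y => α X Z y) x (Y x) - α (D' Y X) Z x - α X (D' Y Z) x)
              - α X Z x * τ Y x
              + α (tors D' X Y) Z x) • N x :=
  statement16_general g D D' hD P N ε hε hNunit hPorth hinv α B τ hGauss hD'tan hWein
end
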